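/- Let (A, [·,·], {·,·,·}, α) be a Hom-Bol superalgebra. For each integer n ≥ 0, the n-th derived Hom-superalgebra (A, [·,·]^{(n)}, {·,·,·}^{(n)}, α^{2^n}), where [x,y]^{(n)} := α^{2^n-1}([x,y]) and {x,y,z}^{(n)} := α^{2^{n+1}-2}({x,y,z}), is a Hom-Bol superalgebra. -/
import Mathlib


namespace SuperAlg

/-- The sign `(-1)^{ab}` for degrees `a b : ZMod 2`. -/
def sgn (k : Type*) [Field k] (a b : ZMod 2) : k := (-1 : k) ^ (a.val * b.val)

variable (k A : Type*) [Field k] [AddCommGroup A] [Module k A]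

/-- Iterated composition of a linear self-map. -/
def lpow (f : A →ₗ[k] A) : ℕ → (A →ₗ[k] A)
  | 0 => LinearMap.id
  | (n + 1) => f.comp (lpow f n)

/-- A (multiplicative) Hom-Bol superalgebra (axioms (SHB1)-(SHB7)). -/
structure HomBolSuper where
  grading : ZMod 2 → Submodule k A
  internal : DirectSum.IsInternal grading
  br : A →ₗ[k] A →ₗ[k] A
  tp : A →ₗ[k] A →ₗ[k] A →ₗ[k] A
  α : A →ₗ[k] A
  br_grade : ∀ (a b : ZMod 2) (x y : A), x ∈ grading a → y ∈ grading b →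
    br x y ∈ grading (a + b)
  tp_grade : ∀ (a b c : ZMod 2) (x y z : A), x ∈ grading a → y ∈ grading b → z ∈ grading c →
    tp x y z ∈ grading (a + b + c)
  α_even : ∀ (a : ZMod 2) (x : A), x ∈ grading a → α x ∈ grading a
  shb1 : ∀ x y : A, α (br x y) = br (α x) (α y)
  shb2 : ∀ x y z : A, α (tp x y z) = tp (α x) (α y) (α z)
  shb3 : ∀ (a b : ZMod 2) (x y : A), x ∈ grading a → y ∈ grading b →
    br x y = - sgn k a b • br y x
  shb4 : ∀ (a b : ZMod 2) (x y z : A), x ∈ grading a → y ∈ grading b →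
    tp x y z = - sgn k a b • tp y x z
  shb5 : ∀ (a b c : ZMod 2) (x y z : A), x ∈ grading a → y ∈ grading b → z ∈ grading c →
    tp x y z + sgn k a (b + c) • tp y z x + sgn k c (a + b) • tp z x y = 0
  shb6 : ∀ (a b c d : ZMod 2) (x y u v : A), x ∈ grading a → y ∈ grading b →
      u ∈ grading c → v ∈ grading d →
    tp (α x) (α y) (br u v) = br (tp x y u) (α (α v))
      + sgn k c (a + b) • br (α (α u)) (tp x y v)
      + sgn k (a + b) (c + d) •
          (tp (α u) (α v) (br x y) - br (br (α u) (α v)) (br (α x) (α y)))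
  shb7 : ∀ (a b c d : ZMod 2) (x y u v w : A), x ∈ grading a → y ∈ grading b →
      u ∈ grading c → v ∈ grading d →
    tp (α (α x)) (α (α y)) (tp u v w) = tp (tp x y u) (α (α v)) (α (α w))
      + sgn k c (a + b) • tp (α (α u)) (tp x y v) (α (α w))
      + sgn k (a + b) (c + d) • tp (α (α u)) (α (α v)) (tp x y w)

lemma lpow_add (f : A →ₗ[k] A) (i j : ℕ) (x : A) :
    lpow k A f (i + j) x = lpow k A f i (lpow k A f j x) := by
  induction i with
  | zero => simp [lpow]
  | succ i ih => rw [Nat.succ_add]; simp [lpow, ih]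

lemma lpow_mem (H : HomBolSuper k A) (j : ℕ) (a : ZMod 2) (x : A)
    (hx : x ∈ H.grading a) : lpow k A H.α j x ∈ H.grading a := by
  induction j with
  | zero => exact hx
  | succ j ih => exact H.α_even a _ ih

lemma lpow_comm (f : A →ₗ[k] A) (j : ℕ) (x : A) :
    lpow k A f j (f x) = f (lpow k A f j x) := by
  induction j with
  | zero => rfl
  | succ j ih => simp [lpow, ih]

lemma lpow_br (H : HomBolSuper k A) (j : ℕ) (x y : A) :
    lpow k A H.α j (H.br x y) = H.br (lpow k A H.α j x) (lpow k A H.α j y) := by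
  induction j with
  | zero => rfl
  | succ j ih => simp [lpow, ih, H.shb1]

lemma lpow_tp (H : HomBolSuper k A) (j : ℕ) (x y z : A) :
    lpow k A H.α j (H.tp x y z)
      = H.tp (lpow k A H.α j x) (lpow k A H.α j y) (lpow k A H.α j z) := by
  induction j with
  | zero => rfl
  | succ j ih => simp [lpow, ih, H.shb2]

theorem derived_general (H : HomBolSuper k A) (β : A →ₗ[k] A)
    (hgr : ∀ (a : ZMod 2) (x : A), x ∈ H.grading a → β x ∈ H.grading a)
    (hαβ : ∀ x : A, β (H.α x) = H.α (β x))
    (hbr : ∀ x y : A, β (H.br x y) = H.br (β x) (β y))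
    (htp : ∀ x y z : A, β (H.tp x y z) = H.tp (β x) (β y) (β z)) :
    ∃ H' : HomBolSuper k A, H'.grading = H.grading ∧
      (∀ x y : A, H'.br x y = β (H.br x y)) ∧
      (∀ x y z : A, H'.tp x y z = β (β (H.tp x y z))) ∧
      H'.α = H.α ∘ₗ β := by
  refine ⟨{ grading := H.grading
            internal := H.internal
            br := LinearMap.mk₂ k (fun x y => β (H.br x y))
              (by intros; simp) (by intros; simp) (by intros; simp) (by intros; simp)
            tp := LinearMap.mk₂ k (fun x y => β ∘ₗ β ∘ₗ H.tp x y)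
              (by intros; ext; simp) (by intros; ext; simp)
              (by intros; ext; simp) (by intros; ext; simp)
            α := H.α ∘ₗ β
            br_grade := ?_
            tp_grade := ?_
            α_even := ?_
            shb1 := ?_
            shb2 := ?_
            shb3 := ?_
            shb4 := ?_
            shb5 := ?_
            shb6 := ?_
            shb7 := ?_ },
    rfl, fun _ _ => rfl, fun _ _ _ => rfl, rfl⟩
  · intro a b x y hx hy
    exact hgr _ _ (H.br_grade a b x y hx hy)
  · intro a b c x y z hx hy hz
    exact hgr _ _ (hgr _ _ (H.tp_grade a b c x y z hx hy hz))
  · intro a x hx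
    exact H.α_even a _ (hgr a x hx)
  · intro x y
    simp only [LinearMap.mk₂_apply, LinearMap.comp_apply, hbr, H.shb1, hαβ]
  · intro x y z
    simp only [LinearMap.mk₂_apply, LinearMap.comp_apply, htp, H.shb2, hαβ]
  · intro a b x y hx hy
    simp only [LinearMap.mk₂_apply]
    rw [H.shb3 a b x y hx hy, map_smul]
  · intro a b x y z hx hy
    simp only [LinearMap.mk₂_apply, LinearMap.comp_apply]
    rw [H.shb4 a b x y z hx hy]
    simp
  · intro a b c x y z hx hy hz
    have h5 := congrArg (fun t => β (β t)) (H.shb5 a b c x y z hx hy hz)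
    simpa using h5
  · intro a b c d x y u v hx hy hu hv
    have key := H.shb6 a b c d (β (β (β x))) (β (β (β y))) (β (β (β u))) (β (β (β v)))
      (hgr _ _ (hgr _ _ (hgr _ _ hx))) (hgr _ _ (hgr _ _ (hgr _ _ hy)))
      (hgr _ _ (hgr _ _ (hgr _ _ hu))) (hgr _ _ (hgr _ _ (hgr _ _ hv)))
    simp only [LinearMap.mk₂_apply, LinearMap.comp_apply, hbr, htp, hαβ,
      H.shb1, H.shb2] at key ⊢
    exact key
  · intro a b c d x y u v w hx hy hu hv
    have key := H.shb7 a b c d (β (β (β (β x)))) (β (β (β (β y))))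
      (β (β (β (β u)))) (β (β (β (β v)))) (β (β (β (β w))))
      (hgr _ _ (hgr _ _ (hgr _ _ (hgr _ _ hx))))
      (hgr _ _ (hgr _ _ (hgr _ _ (hgr _ _ hy))))
      (hgr _ _ (hgr _ _ (hgr _ _ (hgr _ _ hu))))
      (hgr _ _ (hgr _ _ (hgr _ _ (hgr _ _ hv))))
    simp only [LinearMap.mk₂_apply, LinearMap.comp_apply, hbr, htp, hαβ,
      H.shb1, H.shb2] at key ⊢
    exact key

/-- Theorem 4.2 (first part): the `n`-th derived Hom-superalgebra of a Hom-Bol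
superalgebra is a Hom-Bol superalgebra. -/
theorem homBolSuper_derived (H : HomBolSuper k A) (n : ℕ) :
    ∃ H' : HomBolSuper k A, H'.grading = H.grading ∧
      (∀ x y : A, H'.br x y = lpow k A H.α (2 ^ n - 1) (H.br x y)) ∧
      (∀ x y z : A, H'.tp x y z = lpow k A H.α (2 ^ (n + 1) - 2) (H.tp x y z)) ∧
      H'.α = lpow k A H.α (2 ^ n) := by
  have h1 : (1 : ℕ) ≤ 2 ^ n := Nat.one_le_two_pow
  have h2 : 2 ^ (n + 1) = 2 * 2 ^ n := by rw [pow_succ]; ring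
  set β := lpow k A H.α (2 ^ n - 1) with hβ
  obtain ⟨H', hg, hb, ht, ha⟩ := derived_general k A H β
    (fun a x hx => lpow_mem k A H _ a x hx)
    (fun x => lpow_comm k A H.α _ x)
    (fun x y => lpow_br k A H _ x y)
    (fun x y z => lpow_tp k A H _ x y z)
  refine ⟨H', hg, hb, ?_, ?_⟩
  · intro x y z
    have hmm : 2 ^ n - 1 + (2 ^ n - 1) = 2 ^ (n + 1) - 2 := by omega
    rw [ht x y z, hβ, ← lpow_add, hmm]
  · rw [ha]
    have hn : 2 ^ n = (2 ^ n - 1) + 1 := by omega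
    rw [hn]
    rfl

end SuperAlg
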